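/- Let V be a finite-dimensional complex vector space and W an increasing filtration 0 = W_{−3} ⊆ W_{−2} ⊆ W_{−1} ⊆ W_0 = V. Let Y be a grading of W, and let N ∈ End(V) decompose as N = N_0 + N_{−2} where [Y, N_0] = 0, [Y, N_{−2}] = −2·N_{−2}, and N_0 vanishes on E_0(Y) and on E_{−2}(Y). If Y' is any grading of W such that [Y', N](W_j) ⊆ W_{j−2} for all j, then [Y', N] = −2·N_{−2}. -/

import Mathlib

/-!
Since `W₋₃ = 0`, `W₋₂` is the `-2`-eigenspace of both `Y` and `Y'`, and `N₂`, which lowers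
`Y`-weights by 2, kills `W₋₁`. As `[Y', N]` maps `W₋₁` into `W₋₃ = 0`, both sides vanish on `W₋₁`.
For `v ∈ E₀(Y)` we have `N v = N₂ v ∈ W₋₂`, where `Y'` acts by `-2`, so
`[Y', N] v = -2 N₂ v - N (Y' v)`. Here `Y' v ∈ W₋₁`, and `N (W₋₁) ⊆ E₋₁(Y)` because `N₀`
vanishes on `W₋₂ = E₋₂(Y)`; but `N (Y' v) = Y' N v - [Y', N] v ∈ W₋₂`, and `W₋₂ ∩ E₋₁(Y) = 0`.
-/

open Module End

section

variable {K V : Type*} [CommRing K] [AddCommGroup V] [Module K V]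

def IsGrading (W : ℤ → Submodule K V) (Y : End K V) : Prop :=
  ∀ k : ℤ, Disjoint (W (k - 1)) (eigenspace Y (k : K)) ∧
    W k = W (k - 1) ⊔ eigenspace Y (k : K)

theorem Module.End.mapsTo_eigenspace_of_lie_eq_smul {Y A : End K V} {c : K}
    (h : ⁅Y, A⁆ = c • A) (μ : K) :
    Set.MapsTo A (eigenspace Y μ) (eigenspace Y (μ + c)) := by
  intro v hv
  rw [SetLike.mem_coe, mem_eigenspace_iff] at hv ⊢
  have hv' := congr($h v)
  simp only [Ring.lie_def, LinearMap.sub_apply, mul_apply, LinearMap.smul_apply, hv,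
    map_smul] at hv'
  rw [add_smul, ← hv']
  abel

namespace IsGrading

variable {W : ℤ → Submodule K V} {Y : End K V}

theorem sup_eigenspace (hY : IsGrading W Y) (k : ℤ) : W (k - 1) ⊔ eigenspace Y k = W k :=
  (hY k).2.symm

theorem disjoint (hY : IsGrading W Y) (k : ℤ) : Disjoint (W (k - 1)) (eigenspace Y k) :=
  (hY k).1

theorem monotone (hY : IsGrading W Y) : Monotone W :=
  monotone_int_of_le_succ fun n => by
    rw [← hY.sup_eigenspace (n + 1), add_sub_cancel_right]
    exact le_sup_left

theorem eigenspace_le (hY : IsGrading W Y) (k : ℤ) : eigenspace Y k ≤ W k :=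
  hY.sup_eigenspace k ▸ le_sup_right

theorem eq_eigenspace_of_eq_bot (hY : IsGrading W Y) {k : ℤ} (h : W (k - 1) = ⊥) :
    W k = eigenspace Y k := by
  rw [← hY.sup_eigenspace k, h, bot_sup_eq]

theorem mapsTo_of_lie_eq_smul (hY : IsGrading W Y) {m : ℤ} (hbot : W m = ⊥) {A : End K V}
    {j : ℤ} (h : ⁅Y, A⁆ = (j : K) • A) (k : ℤ) : Set.MapsTo A (W k) (W (k + j)) := by
  rcases le_total k m with hk | hk
  · have hWk : W k = ⊥ := le_bot_iff.mp (hbot ▸ hY.monotone hk)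
    intro v hv
    rw [SetLike.mem_coe, hWk, Submodule.mem_bot] at hv
    simp [hv]
  induction k, hk using Int.leInduction with
  | base => simp [hbot]
  | succ k _ ih =>
    intro v hv
    rw [SetLike.mem_coe, ← hY.sup_eigenspace, add_sub_cancel_right, Submodule.mem_sup] at hv
    obtain ⟨a, ha, b, hb, rfl⟩ := hv
    rw [map_add]
    refine add_mem (hY.monotone (by omega) (ih ha)) (hY.eigenspace_le _ ?_)
    have hAb := mapsTo_eigenspace_of_lie_eq_smul h _ hb
    push_cast at hAb ⊢
    exact hAb

theorem mapsTo (hY : IsGrading W Y) {m : ℤ} (hbot : W m = ⊥) (k : ℤ) :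
    Set.MapsTo Y (W k) (W k) := by
  simpa using hY.mapsTo_of_lie_eq_smul hbot (j := 0) (by simp [Ring.lie_def]) k

theorem sub_smul_mem (hY : IsGrading W Y) {m : ℤ} (hbot : W m = ⊥) {k : ℤ} {v : V}
    (hv : v ∈ W k) : Y v - (k : K) • v ∈ W (k - 1) := by
  rw [← hY.sup_eigenspace k, Submodule.mem_sup] at hv
  obtain ⟨a, ha, b, hb, rfl⟩ := hv
  have hYb := mem_eigenspace_iff.mp hb
  have : Y (a + b) - (k : K) • (a + b) = Y a - (k : K) • a := by
    rw [map_add, hYb]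
    module
  rw [this]
  exact sub_mem (hY.mapsTo hbot _ ha) (Submodule.smul_mem _ _ ha)

theorem mapsTo_eigenspace_of_lie_eq_zero (hY : IsGrading W Y) {A : End K V}
    (hA : ⁅Y, A⁆ = 0) {k : ℤ} (hvan : ∀ v ∈ W (k - 1), A v = 0) :
    Set.MapsTo A (W k) (eigenspace Y k) := by
  intro v hv
  rw [SetLike.mem_coe, ← hY.sup_eigenspace k, Submodule.mem_sup] at hv
  obtain ⟨a, ha, b, hb, rfl⟩ := hv
  rw [map_add, hvan a ha, zero_add]
  simpa using mapsTo_eigenspace_of_lie_eq_smul (c := 0) (by simpa using hA) _ hb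

theorem lie_apply_eq_of_disjoint (hY : IsGrading W Y) {m : ℤ} (hbot : W m = ⊥) {N : End K V}
    {E : Submodule K V} {k : ℤ} (hE : Disjoint (W (k - 2)) E) (hNE : Set.MapsTo N (W (k - 1)) E)
    {v : V} (hv : v ∈ W k) (hNv : N v ∈ W (k - 2)) (hbrv : ⁅Y, N⁆ v ∈ W (k - 2)) :
    ⁅Y, N⁆ v = Y (N v) - (k : K) • N v := by
  set w := Y v - (k : K) • v
  have hbr_eq : ⁅Y, N⁆ v = (Y (N v) - (k : K) • N v) - N w := by
    rw [Ring.lie_def, LinearMap.sub_apply, mul_apply, mul_apply, map_sub, map_smul]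
    abel
  have hNw : N w = 0 := by
    refine Submodule.disjoint_def.mp hE _ ?_ (hNE (hY.sub_smul_mem hbot hv))
    rw [show N w = (Y (N v) - (k : K) • N v) - ⁅Y, N⁆ v by rw [hbr_eq]; abel]
    exact sub_mem (sub_mem (hY.mapsTo hbot _ hNv) (Submodule.smul_mem _ _ hNv)) hbrv
  rw [hbr_eq, hNw, sub_zero]

end IsGrading

end

theorem bracket_with_grading_eq_neg_two_Nminus2_general
    {V : Type*} [AddCommGroup V] [Module ℂ V]
    (W : ℤ → Submodule ℂ V)
    (hbot : W (-3) = ⊥) (htop : W 0 = ⊤)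
    (Y : Module.End ℂ V)
    (hY : ∀ k : ℤ, Disjoint (W (k - 1)) (Module.End.eigenspace Y (k : ℂ)) ∧
      W k = W (k - 1) ⊔ Module.End.eigenspace Y (k : ℂ))
    (N N₀ N₂ : Module.End ℂ V) (hN : N = N₀ + N₂)
    (hYN₀ : ⁅Y, N₀⁆ = 0) (hYN₂ : ⁅Y, N₂⁆ = (-2 : ℂ) • N₂)
    (hvan₀ : ∀ v ∈ Module.End.eigenspace Y (0 : ℂ), N₀ v = 0)
    (hvan₂ : ∀ v ∈ Module.End.eigenspace Y (-2 : ℂ), N₀ v = 0)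
    (Y' : Module.End ℂ V)
    (hY' : ∀ k : ℤ, Disjoint (W (k - 1)) (Module.End.eigenspace Y' (k : ℂ)) ∧
      W k = W (k - 1) ⊔ Module.End.eigenspace Y' (k : ℂ))
    (hbr : ∀ j : ℤ, ∀ v ∈ W j, ⁅Y', N⁆ v ∈ W (j - 2)) :
    ⁅Y', N⁆ = (-2 : ℂ) • N₂ := by
  replace hY : IsGrading W Y := hY
  replace hY' : IsGrading W Y' := hY'
  have hW₂ : W (-2) = eigenspace Y (-2) := by
    simpa using hY.eq_eigenspace_of_eq_bot (k := -2) (by simpa using hbot)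
  have hW₂' : W (-2) = eigenspace Y' (-2) := by
    simpa using hY'.eq_eigenspace_of_eq_bot (k := -2) (by simpa using hbot)
  have hN₂ : ∀ v ∈ W (-1), N₂ v = 0 := fun v hv => by
    simpa [hbot] using hY.mapsTo_of_lie_eq_smul hbot (j := -2) (by simpa using hYN₂) (-1) hv
  have hNW₁ : Set.MapsTo N (W (-1)) (eigenspace Y (-1)) := fun v hv => by
    simpa [hN, hN₂ v hv] using
      hY.mapsTo_eigenspace_of_lie_eq_zero hYN₀ (k := -1) (by simpa [hW₂] using hvan₂) hv
  have hW₁ : W (-1) ≤ LinearMap.eqLocus ⁅Y', N⁆ ((-2 : ℂ) • N₂) := fun v hv => by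
    have hbrv : ⁅Y', N⁆ v = 0 := by simpa [hbot] using hbr (-1) v hv
    simp [hbrv, hN₂ v hv]
  have hE₀ : eigenspace Y 0 ≤ LinearMap.eqLocus ⁅Y', N⁆ ((-2 : ℂ) • N₂) := fun v hv => by
    have hNv : N v = N₂ v := by simp [hN, hvan₀ v hv]
    have hNv_mem : N v ∈ W (-2) := by
      simpa [hNv, hW₂] using mapsTo_eigenspace_of_lie_eq_smul hYN₂ 0 hv
    have hv₀ : v ∈ W 0 := htop ▸ Submodule.mem_top
    rw [LinearMap.mem_eqLocus, hY'.lie_apply_eq_of_disjoint hbot (by simpa using hY.disjoint (-1))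
      (by simpa using hNW₁) hv₀ (by simpa using hNv_mem) (by simpa using hbr 0 v hv₀),
      mem_eigenspace_iff.mp (hW₂' ▸ hNv_mem), hNv]
    simp
  have hV : (⊤ : Submodule ℂ V) ≤ LinearMap.eqLocus ⁅Y', N⁆ ((-2 : ℂ) • N₂) := by
    rw [← htop, ← hY.sup_eigenspace 0]
    exact sup_le (by simpa using hW₁) (by simpa using hE₀)
  exact LinearMap.ext fun v => hV Submodule.mem_top

/-- **`N_{-2}` is computable from any grading** (cf. (5.16)–(5.18)): let
`0 = W_{-3} ⊆ W_{-2} ⊆ W_{-1} ⊆ W_0 = V`, let `Y` be a grading of `W`, and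
`N = N₀ + N_{-2}` with `[Y, N₀] = 0`, `[Y, N_{-2}] = -2 N_{-2}` and `N₀` vanishing on
`E₀(Y)` and `E_{-2}(Y)`.  If `Y'` is any grading of `W` with `[Y', N](W_j) ⊆ W_{j-2}`
for all `j`, then `[Y', N] = -2 N_{-2}`. -/
theorem bracket_with_grading_eq_neg_two_Nminus2
    {V : Type*} [AddCommGroup V] [Module ℂ V] [FiniteDimensional ℂ V]
    (W : ℤ → Submodule ℂ V) (hmono : Monotone W)
    (hbot : W (-3) = ⊥) (htop : W 0 = ⊤)
    (Y : Module.End ℂ V)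
    (hY : ∀ k : ℤ, Disjoint (W (k - 1)) (Module.End.eigenspace Y (k : ℂ)) ∧
      W k = W (k - 1) ⊔ Module.End.eigenspace Y (k : ℂ))
    (N N₀ N₂ : Module.End ℂ V) (hN : N = N₀ + N₂)
    (hYN₀ : ⁅Y, N₀⁆ = 0) (hYN₂ : ⁅Y, N₂⁆ = (-2 : ℂ) • N₂)
    (hvan₀ : ∀ v ∈ Module.End.eigenspace Y (0 : ℂ), N₀ v = 0)
    (hvan₂ : ∀ v ∈ Module.End.eigenspace Y (-2 : ℂ), N₀ v = 0)
    (Y' : Module.End ℂ V)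
    (hY' : ∀ k : ℤ, Disjoint (W (k - 1)) (Module.End.eigenspace Y' (k : ℂ)) ∧
      W k = W (k - 1) ⊔ Module.End.eigenspace Y' (k : ℂ))
    (hbr : ∀ j : ℤ, ∀ v ∈ W j, ⁅Y', N⁆ v ∈ W (j - 2)) :
    ⁅Y', N⁆ = (-2 : ℂ) • N₂ :=
  bracket_with_grading_eq_neg_two_Nminus2_general W hbot htop Y hY N N₀ N₂ hN hYN₀ hYN₂ hvan₀ hvan₂
    Y' hY' hbr
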